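/- arXiv:0904.4119 — 6 statements merged into one kernel-verified Lean document; each statement's English description precedes it below -/
import Mathlib

section
/- Let L, K be word languages over a finite alphabet A definable in TL[F,F⁻¹], and let φ be a TL[F,F⁻¹] formula such that in every word over A, φ holds at at most one position. Then the word language {a₁…aₙ : there is an index i with a₁⋯aᵢ ∈ L, a_{i+1}⋯aₙ ∈ K, and φ holds in a₁⋯aₙ at position i+1} is definable in TL[F,F⁻¹]. -/
/-- Formulas of the temporal logic TL[F,F⁻¹] over nonempty finite words over `A`. -/
inductive WFormula (A : Type) : Type where
  | letter (a : A) : WFormula A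
  | not (φ : WFormula A) : WFormula A
  | and (φ ψ : WFormula A) : WFormula A
  | F (φ : WFormula A) : WFormula A
  | P (φ : WFormula A) : WFormula A

/-- Satisfaction of a TL[F,F⁻¹] formula at position `i` of the word `w`: a letter holds at
exactly the positions carrying it, `F φ` holds at `i` iff `φ` holds at some position
`j > i`, and `F⁻¹ φ` holds at `i` iff `φ` holds at some position `j < i`. -/
def WSat {A : Type} (w : List A) : ℕ → WFormula A → Prop
  | i, .letter a => w[i]? = some a
  | i, .not φ => ¬ WSat w i φ
  | i, .and φ ψ => WSat w i φ ∧ WSat w i ψ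
  | i, .F φ => ∃ j, i < j ∧ j < w.length ∧ WSat w j φ
  | i, .P φ => ∃ j, j < i ∧ WSat w j φ

/-- A formula is true in a (nonempty) word iff it holds at the first position. -/
def WordSat {A : Type} (w : List A) (φ : WFormula A) : Prop := WSat w 0 φ

/-- A word language (of nonempty words) is definable in TL[F,F⁻¹] if some formula is true
in exactly its words. -/
def WordDefinable {A : Type} (L : Set (List A)) : Prop :=
  ∃ φ : WFormula A, ∀ w : List A, w ≠ [] → (w ∈ L ↔ WordSat w φ)

/-!
Because `φ` marks at most one position, the cut point `i` of a word in the composed language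
is forced to be the `φ`-position. A formula about the prefix `w.take i` can then be evaluated
inside `w` itself by relativizing it: every `F ψ` becomes "`ψ` at some later position that still
has `φ` in its future". Dually, a formula about the suffix `w.drop i` is evaluated inside `w` by
letting every `P ψ` range only over positions where `φ` holds now or held earlier. The composed
language is thus defined by the relativized prefix formula conjoined with `F (φ ∧ χ)`, where `χ`
is the relativized suffix formula.
-/

namespace WFormula

variable {A : Type}

def or (ψ χ : WFormula A) : WFormula A := .not (.and (.not ψ) (.not χ))

def restrictBefore (φ : WFormula A) : WFormula A → WFormula A
  | .letter a => .letter a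
  | .not ψ => .not (restrictBefore φ ψ)
  | .and ψ χ => .and (restrictBefore φ ψ) (restrictBefore φ χ)
  | .F ψ => .F (.and (restrictBefore φ ψ) (.F φ))
  | .P ψ => .P (restrictBefore φ ψ)

def restrictFrom (φ : WFormula A) : WFormula A → WFormula A
  | .letter a => .letter a
  | .not ψ => .not (restrictFrom φ ψ)
  | .and ψ χ => .and (restrictFrom φ ψ) (restrictFrom φ χ)
  | .F ψ => .F (restrictFrom φ ψ)
  | .P ψ => .P (.and (restrictFrom φ ψ) (.or φ (.P φ)))

end WFormula

open WFormula

section Relativization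

variable {A : Type} {w : List A} {φ : WFormula A} {i : ℕ}

lemma wSat_or (j : ℕ) (ψ χ : WFormula A) : WSat w j (.or ψ χ) ↔ WSat w j ψ ∨ WSat w j χ := by
  simp only [WFormula.or, WSat]
  tauto

lemma wSat_restrictBefore_iff (hi : i < w.length) (hφ : ∀ k < w.length, WSat w k φ ↔ k = i)
    (ψ : WFormula A) {j : ℕ} (hj : j < i) :
    WSat w j (restrictBefore φ ψ) ↔ WSat (w.take i) j ψ := by
  induction ψ generalizing j with
  | letter a => simp only [restrictBefore, WSat, List.getElem?_take_of_lt hj]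
  | not ψ ih => simp only [restrictBefore, WSat, ih hj]
  | and ψ χ ihψ ihχ => simp only [restrictBefore, WSat, ihψ hj, ihχ hj]
  | F ψ ih =>
    simp only [restrictBefore, WSat, List.length_take]
    constructor
    · rintro ⟨k, hjk, -, hψ, m, hkm, hm, hφm⟩
      have hki : k < i := (hφ m hm).1 hφm ▸ hkm
      exact ⟨k, hjk, by omega, (ih hki).1 hψ⟩
    · rintro ⟨k, hjk, hk, hψ⟩
      have hki : k < i := by omega
      exact ⟨k, hjk, by omega, (ih hki).2 hψ, i, hki, hi, (hφ i hi).2 rfl⟩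
  | P ψ ih =>
    simp only [restrictBefore, WSat]
    exact exists_congr fun k => and_congr_right fun hkj => ih (hkj.trans hj)

lemma wSat_restrictFrom_iff (hi : i < w.length) (hφ : ∀ k < w.length, WSat w k φ ↔ k = i)
    (ψ : WFormula A) {j : ℕ} (hj : i + j < w.length) :
    WSat w (i + j) (restrictFrom φ ψ) ↔ WSat (w.drop i) j ψ := by
  induction ψ generalizing j with
  | letter a => simp only [restrictFrom, WSat, List.getElem?_drop]
  | not ψ ih => simp only [restrictFrom, WSat, ih hj]
  | and ψ χ ihψ ihχ => simp only [restrictFrom, WSat, ihψ hj, ihχ hj]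
  | F ψ ih =>
    simp only [restrictFrom, WSat, List.length_drop]
    constructor
    · rintro ⟨k, hjk, hk, hψ⟩
      obtain ⟨m, rfl⟩ : ∃ m, k = i + m := ⟨k - i, by omega⟩
      exact ⟨m, by omega, by omega, (ih hk).1 hψ⟩
    · rintro ⟨m, hjm, hm, hψ⟩
      exact ⟨i + m, by omega, by omega, (ih (by omega)).2 hψ⟩
  | P ψ ih =>
    simp only [restrictFrom, WSat, wSat_or]
    constructor
    · rintro ⟨k, hkj, hψ, hφ_since⟩
      have hik : i ≤ k := by
        rcases hφ_since with hφk | ⟨m, hmk, hφm⟩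
        · exact ((hφ k (by omega)).1 hφk).ge
        · exact (hφ m (by omega)).1 hφm ▸ hmk.le
      obtain ⟨m, rfl⟩ : ∃ m, k = i + m := ⟨k - i, by omega⟩
      exact ⟨m, by omega, (ih (by omega)).1 hψ⟩
    · rintro ⟨m, hmj, hψ⟩
      have hφi : WSat w i φ := (hφ i hi).2 rfl
      refine ⟨i + m, by omega, (ih (by omega)).2 hψ, ?_⟩
      rcases Nat.eq_zero_or_pos m with rfl | hm
      · exact .inl hφi
      · exact .inr ⟨i, by omega, hφi⟩

end Relativization

theorem word_composition_general {A : Type}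
    (L K : Set (List A)) (hL : WordDefinable L) (hK : WordDefinable K)
    (φ : WFormula A)
    (hφ : ∀ (w : List A) (i j : ℕ), i < w.length → j < w.length →
      WSat w i φ → WSat w j φ → i = j) :
    WordDefinable {w : List A |
      ∃ i, 1 ≤ i ∧ i < w.length ∧ w.take i ∈ L ∧ w.drop i ∈ K ∧ WSat w i φ} := by
  obtain ⟨α, hα⟩ := hL
  obtain ⟨β, hβ⟩ := hK
  refine ⟨.and (restrictBefore φ α) (.F (.and φ (restrictFrom φ β))), fun w _ => ?_⟩
  have factor : ∀ i, 1 ≤ i → i < w.length → WSat w i φ →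
      (w.take i ∈ L ↔ WSat w 0 (restrictBefore φ α)) ∧
        (w.drop i ∈ K ↔ WSat w i (restrictFrom φ β)) := by
    intro i h1 hi hφi
    have hunique : ∀ k < w.length, WSat w k φ ↔ k = i :=
      fun k hk => ⟨fun hφk => hφ w k i hk hi hφk hφi, fun h => h ▸ hφi⟩
    refine ⟨?_, ?_⟩
    · rw [hα _ (List.ne_nil_of_length_pos (by rw [List.length_take]; omega)),
        wSat_restrictBefore_iff hi hunique α h1, WordSat]
    · rw [hβ _ (List.ne_nil_of_length_pos (by rw [List.length_drop]; omega)), WordSat,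
        ← wSat_restrictFrom_iff hi hunique β (by omega), Nat.add_zero]
  simp only [Set.mem_ofPred_eq, WordSat, WSat]
  constructor
  · rintro ⟨i, h1, hi, hL, hK, hφi⟩
    obtain ⟨hLi, hKi⟩ := factor i h1 hi hφi
    exact ⟨hLi.1 hL, i, h1, hi, hφi, hKi.1 hK⟩
  · rintro ⟨h0, i, h1, hi, hφi, hβi⟩
    obtain ⟨hLi, hKi⟩ := factor i h1 hi hφi
    exact ⟨i, h1, hi, hLi.2 h0, hKi.2 hβi, hφi⟩

/-- composition for words: if `L, K` are TL[F,F⁻¹]-definable word languages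
and `φ` holds at at most one position of every word, then
`{a₁…aₙ : ∃ i, a₁⋯aᵢ ∈ L, a_{i+1}⋯aₙ ∈ K, and φ holds in a₁…aₙ at position i+1}`
is TL[F,F⁻¹]-definable.  (Positions are 0-indexed below: the 1-indexed position `i+1`
is index `i`, the prefix `a₁⋯aᵢ` is `w.take i` and the suffix `a_{i+1}⋯aₙ` is `w.drop i`.) -/
theorem word_composition {A : Type} [Finite A]
    (L K : Set (List A)) (hL : WordDefinable L) (hK : WordDefinable K)
    (φ : WFormula A)
    (hφ : ∀ (w : List A) (i j : ℕ), i < w.length → j < w.length →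
      WSat w i φ → WSat w j φ → i = j) :
    WordDefinable {w : List A |
      ∃ i, 1 ≤ i ∧ i < w.length ∧ w.take i ∈ L ∧ w.drop i ∈ K ∧ WSat w i φ} :=
  word_composition_general L K hL hK φ hφ
end

section
/- There exists a finite forest algebra (H,V) in which the relation ⊣ is not transitive: there are u, v, w ∈ V with u ⊣ v and v ⊣ w but not u ⊣ w. -/
/-
Take `H = ℤ/3ℤ` under multiplication and `V` all maps `H → H`. Left multiplication by `h` is
a bijection for `h ≠ 0` and constant for `h = 0`, so whenever `u ⊣ w` with `u` bijective,
`w` is bijective or constant. But `id ⊣ 0 ⊣ (x ↦ x²)`, and `x ↦ x²` is neither.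
-/

/-- A forest algebra `(H, V)`: a semigroup `(H, +)`, a monoid `(V, ·)` with unit `□`,
a faithful monoid action of `V` on `H`, and mixed operations `h + v` and `v + h`. -/
structure ForestAlgebra (H V : Type) where
  addH : H → H → H
  mulV : V → V → V
  unit : V
  act : V → H → H
  addL : H → V → V
  addR : V → H → V
  addH_assoc : ∀ f g h, addH (addH f g) h = addH f (addH g h)
  mulV_assoc : ∀ u v w, mulV (mulV u v) w = mulV u (mulV v w)
  unit_mul : ∀ v, mulV unit v = v
  mul_unit : ∀ v, mulV v unit = v
  act_unit : ∀ h, act unit h = h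
  act_mul : ∀ v w h, act (mulV v w) h = act v (act w h)
  faithful : ∀ v w, (∀ h, act v h = act w h) → v = w
  addL_act : ∀ h v g, act (addL h v) g = addH h (act v g)
  addR_act : ∀ v h g, act (addR v h) g = addH (act v g) h

namespace ForestAlgebra

variable {H V : Type}

/-- `v^n` in the vertical monoid. -/
def powV (FA : ForestAlgebra H V) (v : V) : ℕ → V
  | 0 => FA.unit
  | n + 1 => FA.mulV v (FA.powV v n)

/-- The relation `u ⊣ w`: `u = v₀v₁⋯vₙ` and `w = v₀(h₁+v₁)⋯(hₙ+vₙ)` for some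
`v₀,…,vₙ ∈ V` and `h₁,…,hₙ ∈ H`. -/
def Strip (FA : ForestAlgebra H V) (u w : V) : Prop :=
  ∃ (v0 : V) (L : List (H × V)),
    u = L.foldl (fun acc hv => FA.mulV acc hv.2) v0 ∧
    w = L.foldl (fun acc hv => FA.mulV acc (FA.addL hv.1 hv.2)) v0

/-- Identity (1): `h + h = h` and `g + h = h + g`. -/
def Id1 (FA : ForestAlgebra H V) : Prop :=
  (∀ h, FA.addH h h = h) ∧ (∀ g h, FA.addH g h = FA.addH h g)

/-- Identity (2): `(vw)^ω = (vw)^ω w (vw)^ω`, where an identity involving `ω`-powers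
asserts equality for all sufficiently large exponents. -/
def Id2 (FA : ForestAlgebra H V) : Prop :=
  ∀ v w : V, ∃ m, ∀ n ≥ m,
    FA.powV (FA.mulV v w) n =
      FA.mulV (FA.mulV (FA.powV (FA.mulV v w) n) w) (FA.powV (FA.mulV v w) n)

/-- Identity (3): `(u₁w₁)^ω (u₂w₂)^ω = (u₁w₁)^ω u₁ w₂ (u₂w₂)^ω` whenever
`u₁ ⊣ u₂` and `w₁ ⊣ w₂`. -/
def Id3 (FA : ForestAlgebra H V) : Prop :=
  ∀ u1 u2 w1 w2 : V, FA.Strip u1 u2 → FA.Strip w1 w2 →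
    ∃ m, ∀ n ≥ m,
      FA.mulV (FA.powV (FA.mulV u1 w1) n) (FA.powV (FA.mulV u2 w2) n) =
        FA.mulV (FA.mulV (FA.mulV (FA.powV (FA.mulV u1 w1) n) u1) w2)
          (FA.powV (FA.mulV u2 w2) n)

/-- The context type `v` is reachable from `w` if `v = wu` for some `u ∈ V`. -/
def CtxReach (FA : ForestAlgebra H V) (w v : V) : Prop := ∃ u, v = FA.mulV w u

/-- Two context types are in the same context component if each is reachable from the other. -/
def SameCC (FA : ForestAlgebra H V) (v w : V) : Prop := FA.CtxReach v w ∧ FA.CtxReach w v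

/-- The forest type `g` is reachable from `h` if `g = uh` for some `u ∈ V`. -/
def HReach (FA : ForestAlgebra H V) (h g : H) : Prop := ∃ u, g = FA.act u h

/-- Two forest types are in the same forest component if each is reachable from the other. -/
def SameFC (FA : ForestAlgebra H V) (g h : H) : Prop := FA.HReach g h ∧ FA.HReach h g

end ForestAlgebra


open Function

theorem bijective_of_bijective_comp {α : Type} [Finite α] {f g : α → α}
    (hfg : Bijective (f ∘ g)) : Bijective f ∧ Bijective g :=
  ⟨Finite.surjective_iff_bijective.mp hfg.surjective.of_comp,
    Finite.injective_iff_bijective.mp hfg.injective.of_comp⟩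

namespace ForestAlgebra

variable {H V : Type}

theorem strip_single (FA : ForestAlgebra H V) {u w : V} (a b : V) (h : H)
    (hu : u = FA.mulV a b) (hw : w = FA.mulV a (FA.addL h b)) : FA.Strip u w :=
  ⟨a, [(h, b)], hu, hw⟩

theorem Strip.induction {FA : ForestAlgebra H V} {P : V → V → Prop} (refl : ∀ v, P v v)
    (step : ∀ a b f h, P a b → P (FA.mulV a f) (FA.mulV b (FA.addL h f)))
    {u w : V} (huw : FA.Strip u w) : P u w := by
  obtain ⟨v₀, L, rfl, rfl⟩ := huw
  suffices ∀ a b, P a b → P (L.foldl (fun acc hv => FA.mulV acc hv.2) a)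
      (L.foldl (fun acc hv => FA.mulV acc (FA.addL hv.1 hv.2)) b) from this v₀ v₀ (refl v₀)
  induction L with
  | nil => exact fun _ _ hab => hab
  | cons p L ih => exact fun a b hab => ih _ _ (step a b p.2 p.1 hab)

/-- The forest algebra of all transformations of a semigroup `S`; the horizontal operation `+`
of the forest algebra is the multiplication of `S`. -/
def ofSemigroup (S : Type) [Semigroup S] : ForestAlgebra S (S → S) where
  addH := (· * ·)
  mulV := (· ∘ ·)
  unit := id
  act := id
  addL := fun h v g => h * v g
  addR := fun v h g => v g * h
  addH_assoc := mul_assoc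
  mulV_assoc _ _ _ := rfl
  unit_mul _ := rfl
  mul_unit _ := rfl
  act_unit _ := rfl
  act_mul _ _ _ := rfl
  faithful _ _ := funext
  addL_act _ _ _ := rfl
  addR_act _ _ _ := rfl

theorem Strip.ofSemigroup_bijective_or_const {G₀ : Type} [GroupWithZero G₀] [Finite G₀]
    {u w : G₀ → G₀} (huw : (ofSemigroup G₀).Strip u w) (hu : Bijective u) :
    Bijective w ∨ ∀ x y, w x = w y := by
  refine Strip.induction (P := fun a b => Bijective a → Bijective b ∨ ∀ x y, b x = b y)
    (fun _ hv => Or.inl hv) ?_ huw hu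
  intro a b f h hab (haf : Bijective (a ∘ f))
  obtain ⟨ha, hf⟩ := bijective_of_bijective_comp haf
  change Bijective (b ∘ (h * ·) ∘ f) ∨ ∀ x y, b (h * f x) = b (h * f y)
  rcases eq_or_ne h 0 with rfl | hh
  · exact Or.inr fun _ _ => by simp only [zero_mul]
  rcases hab ha with hb | hb
  · exact Or.inl (hb.comp ((Equiv.mulLeft₀ h hh).bijective.comp hf))
  · exact Or.inr fun _ _ => hb _ _

end ForestAlgebra

/-- There exists a finite forest algebra `(H,V)` in which the relation `⊣`
is not transitive. -/
theorem strip_not_transitive :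
    ∃ (H V : Type) (_ : Finite H) (_ : Finite V) (FA : ForestAlgebra H V) (u v w : V),
      FA.Strip u v ∧ FA.Strip v w ∧ ¬ FA.Strip u w := by
  refine ⟨ZMod 3, ZMod 3 → ZMod 3, inferInstance, inferInstance,
    ForestAlgebra.ofSemigroup (ZMod 3), id, fun _ => 0, (· ^ 2), ?_, ?_, ?_⟩
  · exact ForestAlgebra.strip_single _ id id 0 rfl (funext fun x => (zero_mul x).symm)
  -- `a` vanishes on `{0, 1}` and sends `2 ↦ 1`, so `a ∘ x² = 0` and `a ∘ (2 * x²) = x²`.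
  · let a : ZMod 3 → ZMod 3 := fun y => 2 * y * (y - 1)
    exact ForestAlgebra.strip_single _ a (· ^ 2) 2 (by decide) (by decide)
  · intro huw
    rcases huw.ofSemigroup_bijective_or_const bijective_id with hbij | hconst
    · exact absurd (hbij.injective (show (1 : ZMod 3) ^ 2 = 2 ^ 2 by decide)) (by decide)
    · exact absurd (hconst 0 1) (by decide)
end

section
/- There exists a finite forest algebra satisfying identities (1) and (2) but not identity (3). -/
namespace ForestAlgebra

variable {H V : Type}

def ofSubmonoid (add : H → H → H) (add_assoc : ∀ f g h, add (add f g) h = add f (add g h))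
    (S : Submonoid (Function.End H))
    (addL_mem : ∀ h, ∀ v ∈ S, (fun g => add h (v g) : Function.End H) ∈ S)
    (addR_mem : ∀ h, ∀ v ∈ S, (fun g => add (v g) h : Function.End H) ∈ S) :
    ForestAlgebra H S where
  addH := add
  mulV := (· * ·)
  unit := 1
  act v := v.1
  addL h v := ⟨_, addL_mem h v.1 v.2⟩
  addR v h := ⟨_, addR_mem h v.1 v.2⟩
  addH_assoc := add_assoc
  mulV_assoc := mul_assoc
  unit_mul := one_mul
  mul_unit := mul_one
  act_unit _ := rfl
  act_mul _ _ _ := rfl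
  faithful _ _ h := Subtype.ext (funext h)
  addL_act _ _ _ := rfl
  addR_act _ _ _ := rfl

variable {FA : ForestAlgebra H V}

theorem strip_mul_addL (v₀ v₁ : V) (h : H) :
    FA.Strip (FA.mulV v₀ v₁) (FA.mulV v₀ (FA.addL h v₁)) :=
  ⟨v₀, [(h, v₁)], rfl, rfl⟩

theorem powV_eq_of_powV_succ_eq {x : V} {k n : ℕ} (hx : FA.powV x (k + 1) = FA.powV x k)
    (hkn : k ≤ n) : FA.powV x n = FA.powV x k := by
  induction n, hkn using Nat.le_induction with
  | base => rfl
  | succ n _ ih =>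
    calc FA.powV x (n + 1) = FA.mulV x (FA.powV x n) := rfl
      _ = FA.powV x k := by rw [ih]; exact hx

theorem id2_of_powV_succ_eq (k : ℕ) (hpow : ∀ x, FA.powV x (k + 1) = FA.powV x k)
    (h : ∀ v w : V, FA.powV (FA.mulV v w) k =
      FA.mulV (FA.mulV (FA.powV (FA.mulV v w) k) w) (FA.powV (FA.mulV v w) k)) :
    FA.Id2 := fun v w =>
  ⟨k, fun _ hn => by rw [powV_eq_of_powV_succ_eq (hpow _) hn]; exact h v w⟩

theorem not_id3_of_powV_succ_eq (k : ℕ) (hpow : ∀ x, FA.powV x (k + 1) = FA.powV x k)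
    {u₁ u₂ w₁ w₂ : V} (hu : FA.Strip u₁ u₂) (hw : FA.Strip w₁ w₂)
    (hne : FA.mulV (FA.powV (FA.mulV u₁ w₁) k) (FA.powV (FA.mulV u₂ w₂) k) ≠
      FA.mulV (FA.mulV (FA.mulV (FA.powV (FA.mulV u₁ w₁) k) u₁) w₂)
        (FA.powV (FA.mulV u₂ w₂) k)) :
    ¬ FA.Id3 := by
  intro h3
  obtain ⟨m, hm⟩ := h3 u₁ u₂ w₁ w₂ hu hw
  apply hne
  simpa only [powV_eq_of_powV_succ_eq (hpow _) (le_max_right m k)] using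
    hm (max m k) (le_max_left m k)

end ForestAlgebra

namespace ChainMaps

def maps : Finset (Fin 3 → Fin 3) :=
  {![0, 0, 0], ![0, 1, 0], ![0, 1, 2], ![1, 1, 0], ![1, 1, 1], ![1, 1, 2], ![2, 2, 2]}

def submonoid : Submonoid (Function.End (Fin 3)) where
  carrier := {f | f ∈ maps}
  one_mem' := by decide
  mul_mem' {f g} := by
    have closed : ∀ f ∈ maps, ∀ g ∈ maps, f ∘ g ∈ maps := by decide
    exact fun hf hg => closed f hf g hg

instance : Fintype submonoid := Fintype.subtype maps fun _ => Iff.rfl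

instance : DecidableEq submonoid := inferInstanceAs (DecidableEq {f : Fin 3 → Fin 3 // f ∈ maps})

def algebra : ForestAlgebra (Fin 3) submonoid :=
  ForestAlgebra.ofSubmonoid max max_assoc submonoid
    (by
      have closed : ∀ h, ∀ f ∈ maps, (fun g => max h (f g)) ∈ maps := by decide
      exact closed)
    (by
      have closed : ∀ h, ∀ f ∈ maps, (fun g => max (f g) h) ∈ maps := by decide
      exact closed)

def dropTop : submonoid := ⟨![0, 1, 0], show ![0, 1, 0] ∈ maps by decide⟩

theorem powV_three (x : submonoid) : algebra.powV x 3 = algebra.powV x 2 := by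
  revert x; decide

theorem id2_at_two (v w : submonoid) :
    algebra.powV (algebra.mulV v w) 2 =
      algebra.mulV (algebra.mulV (algebra.powV (algebra.mulV v w) 2) w)
        (algebra.powV (algebra.mulV v w) 2) := by
  revert v w; decide

end ChainMaps

/-- There exists a finite forest algebra satisfying identities (1) and (2)
but not identity (3). -/
theorem exists_algebra_id1_id2_not_id3 :
    ∃ (H V : Type) (_ : Finite H) (_ : Finite V) (FA : ForestAlgebra H V),
      FA.Id1 ∧ FA.Id2 ∧ ¬ FA.Id3 :=
  ⟨Fin 3, ChainMaps.submonoid, inferInstance, inferInstance, ChainMaps.algebra,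
    ⟨max_self, max_comm⟩,
    ForestAlgebra.id2_of_powV_succ_eq 2 ChainMaps.powV_three ChainMaps.id2_at_two,
    ForestAlgebra.not_id3_of_powV_succ_eq 2 ChainMaps.powV_three
      (ForestAlgebra.strip_mul_addL 1 1 1) (ForestAlgebra.strip_mul_addL ChainMaps.dropTop 1 2)
      (by decide)⟩
end

section
/- Let (H,V) be a finite forest algebra satisfying identity (2). If the context types v, w, and vu are all in the same context component, then wu is also in that context component. -/
namespace ForestAlgebra

variable {H V : Type} (FA : ForestAlgebra H V)

theorem ctxReach_mulV_right (w u : V) : FA.CtxReach w (FA.mulV w u) := ⟨u, rfl⟩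

theorem CtxReach.trans {FA : ForestAlgebra H V} {a b c : V} (hab : FA.CtxReach a b)
    (hbc : FA.CtxReach b c) : FA.CtxReach a c := by
  obtain ⟨x, rfl⟩ := hab
  obtain ⟨y, rfl⟩ := hbc
  exact ⟨FA.mulV x y, FA.mulV_assoc a x y⟩

theorem mulV_powV_eq_self {w x : V} (hx : FA.mulV w x = w) (n : ℕ) :
    FA.mulV w (FA.powV x n) = w := by
  induction n with
  | zero => exact FA.mul_unit w
  | succ n ih => rw [powV, ← FA.mulV_assoc, hx, ih]

theorem ctxReach_of_mulV_mulV_eq (h2 : FA.Id2) {w t q : V}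
    (hw : FA.mulV w (FA.mulV t q) = w) : FA.CtxReach (FA.mulV w q) w := by
  obtain ⟨m, hm⟩ := h2 t q
  set c := FA.mulV t q
  have hc : FA.mulV w (FA.powV c m) = w := FA.mulV_powV_eq_self hw m
  refine ⟨FA.powV c m, ?_⟩
  calc w = FA.mulV w (FA.powV c m) := hc.symm
    _ = FA.mulV (FA.mulV (FA.mulV w (FA.powV c m)) q) (FA.powV c m) := by
      conv_lhs => rw [hm m le_rfl]
      simp only [FA.mulV_assoc]
    _ = FA.mulV (FA.mulV w q) (FA.powV c m) := by rw [hc]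

end ForestAlgebra

theorem mul_mem_context_component_general {H V : Type}
    (FA : ForestAlgebra H V) (h2 : FA.Id2) (v w u : V)
    (hvw : FA.SameCC v w) (hvvu : FA.SameCC v (FA.mulV v u)) :
    FA.SameCC v (FA.mulV w u) := by
  obtain ⟨⟨s, hs⟩, t, ht⟩ := hvw
  obtain ⟨-, a, ha⟩ := hvvu
  -- `w = v s = v u a s = w t u a s`
  have hloop : FA.mulV w (FA.mulV t (FA.mulV u (FA.mulV a s))) = w := by
    simp only [← FA.mulV_assoc]
    rw [← ht, ← ha, ← hs]
  have hwu_w : FA.CtxReach (FA.mulV w u) w :=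
    ForestAlgebra.CtxReach.trans ⟨FA.mulV a s, (FA.mulV_assoc w u _).symm⟩
      (FA.ctxReach_of_mulV_mulV_eq h2 hloop)
  have hv_wu : FA.CtxReach v (FA.mulV w u) :=
    ForestAlgebra.CtxReach.trans ⟨s, hs⟩ (FA.ctxReach_mulV_right w u)
  exact ⟨hv_wu, hwu_w.trans ⟨t, ht⟩⟩

/-- In a finite forest algebra satisfying identity (2), if the context types
`v`, `w` and `vu` are all in the same context component, then so is `wu`. -/
theorem mul_mem_context_component {H V : Type} [Finite H] [Finite V]
    (FA : ForestAlgebra H V) (h2 : FA.Id2) (v w u : V)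
    (hvw : FA.SameCC v w) (hvvu : FA.SameCC v (FA.mulV v u)) :
    FA.SameCC v (FA.mulV w u) :=
  mul_mem_context_component_general FA h2 v w u hvw hvvu
end

section
/- Let (H,V) be a finite forest algebra satisfying identity (2). If the forest types g, h, and vg are all in the same forest component, then vh is also in that forest component. -/
/-!
Write `h = a g`, `g = b h` and `g = u v g`. Then `w = a u v b` fixes `h`, and so does its
idempotent power `e = w^ω`. Identity (2) for the pair `(a u, v b)` gives `e = e (v b) e`. In a
monoid satisfying (2), an idempotent with `e = e (x y) e` also satisfies `e = e x e`: apply (2)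
to the pair `(y e, e x)`, whose product in the other order is `e`. Hence
`e v h = e v e h = e h = h`, so `g = b e (v h)`.
-/

open MulAction

theorem exists_isIdempotentElem_pow {M : Type*} [Monoid M] [Finite M] (x : M) :
    ∃ k ≠ 0, IsIdempotentElem (x ^ k) := by
  obtain ⟨i, j, hij, hx⟩ := Set.finite_univ.exists_lt_map_eq_of_forall_mem
    (f := (x ^ · : ℕ → M)) fun _ => Set.mem_univ _
  obtain ⟨q, hq, rfl⟩ : ∃ q ≠ 0, j = i + q := ⟨j - i, by omega, by omega⟩
  have periodic (c : ℕ) : x ^ (i + c * q) = x ^ i := by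
    induction c with
    | zero => simp
    | succ c ih => rw [add_mul, one_mul, ← add_assoc, pow_add, ih, ← pow_add, ← hx]
  obtain ⟨r, hr⟩ := Nat.exists_eq_add_of_le (show i ≤ (i + 1) * q by
    nlinarith [Nat.one_le_iff_ne_zero.2 hq])
  refine ⟨(i + 1) * q, by positivity, ?_⟩
  calc x ^ ((i + 1) * q) * x ^ ((i + 1) * q) = x ^ r * x ^ (i + (i + 1) * q) := by
        rw [pow_add x i, ← mul_assoc, ← pow_add x r i, add_comm r i, ← hr]
    _ = x ^ ((i + 1) * q) := by rw [periodic, ← pow_add, add_comm, hr]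

def Monoid.Id2 (M : Type*) [Monoid M] : Prop :=
  ∀ x y : M, ∃ m, ∀ n ≥ m, (x * y) ^ n = (x * y) ^ n * y * (x * y) ^ n

namespace Monoid.Id2

variable {M : Type*} [Monoid M]

theorem pow_eq_pow_mul_mul_pow (hM : Monoid.Id2 M) {x y : M} {k : ℕ} (hk : k ≠ 0)
    (he : IsIdempotentElem ((x * y) ^ k)) : (x * y) ^ k = (x * y) ^ k * y * (x * y) ^ k := by
  obtain ⟨m, hm⟩ := hM x y
  have hpow : (x * y) ^ (k * (m + 1)) = (x * y) ^ k := by rw [pow_mul, he.pow_succ_eq]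
  simpa only [hpow] using hm (k * (m + 1)) (by nlinarith [Nat.one_le_iff_ne_zero.2 hk])

theorem eq_mul_mul_of_eq_mul_mul_mul (hM : Monoid.Id2 M) {e x y : M} (he : IsIdempotentElem e)
    (hexy : e = e * (x * y) * e) : e = e * x * e := by
  obtain ⟨m, hm⟩ := hM (y * e) (e * x)
  set s := e * x
  set t := y * e
  have hst : s * t = e := by rw [hexy]; simp only [s, t, mul_assoc]
  have hs : s * (t * s) ^ (m + 1) = s := by
    rw [← mul_pow_mul, hst, he.pow_succ_eq, ← mul_assoc, he.eq]
  have ht : (t * s) ^ (m + 1) * t = t := by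
    rw [mul_pow_mul, hst, he.pow_succ_eq, mul_assoc, he.eq]
  calc e = s * t := hst.symm
    _ = s * (t * s) ^ (m + 1) * t := by rw [hs]
    _ = s * ((t * s) ^ (m + 1) * s * (t * s) ^ (m + 1)) * t := by rw [← hm (m + 1) (by omega)]
    _ = (s * (t * s) ^ (m + 1)) * s * ((t * s) ^ (m + 1) * t) := by simp only [mul_assoc]
    _ = e * x * e := by rw [hs, ht, mul_assoc, hst]

theorem mem_orbit_smul [Finite M] {α : Type*} [MulAction M α] (hM : Monoid.Id2 M)
    {g h : α} {v : M} (hgh : h ∈ orbit M g) (hhg : g ∈ orbit M h) (hvg : g ∈ orbit M (v • g)) :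
    g ∈ orbit M (v • h) := by
  obtain ⟨a, rfl⟩ := hgh
  obtain ⟨b, hb⟩ := mem_orbit_iff.1 hhg
  obtain ⟨u, hu⟩ := mem_orbit_iff.1 hvg
  set w := a * u * (v * b)
  have hw : w • a • g = a • g := by
    simp only [w, mul_smul]; rw [hb, hu]
  obtain ⟨k, hk, he⟩ := exists_isIdempotentElem_pow w
  have hwk : w ^ k • a • g = a • g :=
    mem_stabilizerSubmonoid_iff.1 (Submonoid.pow_mem _ (mem_stabilizerSubmonoid_iff.2 hw) k)
  have hwvw : w ^ k = w ^ k * v * w ^ k :=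
    hM.eq_mul_mul_of_eq_mul_mul_mul he (hM.pow_eq_pow_mul_mul_pow hk he)
  refine ⟨b * w ^ k, ?_⟩
  calc (b * w ^ k) • v • a • g = b • (w ^ k * v * w ^ k) • a • g := by
        simp only [mul_smul, hwk]
    _ = g := by rw [← hwvw, hwk, hb]

end Monoid.Id2

namespace ForestAlgebra

variable {H V : Type} (FA : ForestAlgebra H V)

abbrev toMonoid : Monoid V where
  mul := FA.mulV
  one := FA.unit
  mul_assoc := FA.mulV_assoc
  one_mul := FA.unit_mul
  mul_one := FA.mul_unit

abbrev toMulAction : letI := FA.toMonoid; MulAction V H :=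
  letI := FA.toMonoid
  { smul := FA.act, one_smul := FA.act_unit, mul_smul := FA.act_mul }

theorem powV_eq_pow (x : V) (n : ℕ) : letI := FA.toMonoid; FA.powV x n = x ^ n := by
  let := FA.toMonoid
  induction n with
  | zero => rfl
  | succ n ih => rw [pow_succ', ← ih]; rfl

theorem Id2.toMonoid {FA : ForestAlgebra H V} (h2 : FA.Id2) : @Monoid.Id2 V FA.toMonoid := by
  let := FA.toMonoid
  intro x y
  obtain ⟨m, hm⟩ := h2 x y
  refine ⟨m, fun n hn => ?_⟩
  have := hm n hn
  rwa [powV_eq_pow] at this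

theorem hReach_iff_mem_orbit {g h : H} :
    letI := FA.toMonoid; letI := FA.toMulAction; FA.HReach h g ↔ g ∈ orbit V h :=
  exists_congr fun _ => eq_comm

end ForestAlgebra

theorem act_mem_forest_component_general {H V : Type} [Finite V]
    (FA : ForestAlgebra H V) (h2 : FA.Id2) (g h : H) (v : V)
    (hgh : FA.SameFC g h) (hgvg : FA.SameFC g (FA.act v g)) :
    FA.SameFC g (FA.act v h) := by
  let := FA.toMonoid
  let := FA.toMulAction
  simp only [ForestAlgebra.SameFC, FA.hReach_iff_mem_orbit] at hgh hgvg ⊢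
  exact ⟨mem_orbit_of_mem_orbit v hgh.1, h2.toMonoid.mem_orbit_smul hgh.1 hgh.2 hgvg.2⟩

/-- In a finite forest algebra satisfying identity (2), if the forest types
`g`, `h` and `vg` are all in the same forest component, then so is `vh`. -/
theorem act_mem_forest_component {H V : Type} [Finite H] [Finite V]
    (FA : ForestAlgebra H V) (h2 : FA.Id2) (g h : H) (v : V)
    (hgh : FA.SameFC g h) (hgvg : FA.SameFC g (FA.act v g)) :
    FA.SameFC g (FA.act v h) :=
  act_mem_forest_component_general FA h2 g h v hgh hgvg
end

section
/- Let V be a finite monoid such that for all v, w ∈ V and all sufficiently large n, (vw)ⁿ = (vw)ⁿ w (vw)ⁿ. Then V is aperiodic: for every v ∈ V and all sufficiently large n, vⁿ = vⁿ⁺¹. -/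
/-!
Taking `v = 1` in the identity gives `wⁿ = wⁿ w wⁿ = w²ⁿ⁺¹` for large `n`. Then
`wⁿ⁺¹ = w²ⁿ⁺¹ w = w²ⁿ⁺²`, while the identity at `n + 1` gives `wⁿ⁺¹ = w²ⁿ⁺³`; hence
`w²ⁿ⁺² = w²ⁿ⁺³`, and an equality `wᵏ = wᵏ⁺¹` persists to all larger exponents.
-/

section Monoid

variable {M : Type*} [Monoid M] {x : M}

lemma pow_eq_pow_succ_of_le {k n : ℕ} (hk : x ^ k = x ^ (k + 1)) (hn : k ≤ n) :
    x ^ n = x ^ (n + 1) := by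
  induction n, hn using Nat.le_induction with
  | base => exact hk
  | succ n _ ih => rw [pow_succ x n, ih, ← pow_succ]

lemma pow_mul_mul_pow (n : ℕ) : x ^ n * x * x ^ n = x ^ (2 * n + 1) := by
  rw [← pow_succ, ← pow_add]
  ring_nf

lemma pow_two_mul_add_two_eq_succ {n : ℕ} (hn : x ^ n = x ^ n * x * x ^ n)
    (hn' : x ^ (n + 1) = x ^ (n + 1) * x * x ^ (n + 1)) :
    x ^ (2 * n + 2) = x ^ (2 * n + 3) := by
  rw [pow_mul_mul_pow] at hn hn'
  calc x ^ (2 * n + 2) = x ^ (2 * n + 1) * x := pow_succ x _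
    _ = x ^ (n + 1) := by rw [← hn, ← pow_succ]
    _ = x ^ (2 * n + 3) := hn'

end Monoid

theorem aperiodic_of_DA_identity_general {V : Type} [Monoid V]
    (h : ∀ v w : V, ∃ m, ∀ n ≥ m, (v * w) ^ n = (v * w) ^ n * w * (v * w) ^ n) :
    ∀ v : V, ∃ m, ∀ n ≥ m, v ^ n = v ^ (n + 1) := by
  intro v
  obtain ⟨m, hm⟩ := h 1 v
  simp only [one_mul] at hm
  have hstable : v ^ (2 * m + 2) = v ^ (2 * m + 2 + 1) :=
    pow_two_mul_add_two_eq_succ (hm m le_rfl) (hm (m + 1) m.le_succ)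
  exact ⟨2 * m + 2, fun n hn => pow_eq_pow_succ_of_le hstable hn⟩

/-- Let `V` be a finite monoid such that for all `v, w ∈ V` and all
sufficiently large `n`, `(vw)ⁿ = (vw)ⁿ w (vw)ⁿ`. Then `V` is aperiodic: for every `v ∈ V`
and all sufficiently large `n`, `vⁿ = vⁿ⁺¹`. -/
theorem aperiodic_of_DA_identity {V : Type} [Monoid V] [Finite V]
    (h : ∀ v w : V, ∃ m, ∀ n ≥ m, (v * w) ^ n = (v * w) ^ n * w * (v * w) ^ n) :
    ∀ v : V, ∃ m, ∀ n ≥ m, v ^ n = v ^ (n + 1) :=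
  aperiodic_of_DA_identity_general h
end
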